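/- arXiv:1212.5083 — 4 statements merged into one kernel-verified Lean document; each statement's English description precedes it below -/
import Mathlib

section
/- For integers d and a with 2 ≤ a ≤ d−2, one has (binomial(d,a)−1)(binomial(d,a)−2)/2 ≠ 1 + (1/2)·binomial(d,a)·(a(d−a)−2). Equivalently, the arithmetic genus of a plane curve of degree binomial(d,a) differs from 1 + (1/2)·binomial(d,a)·(a(d−a)−2). -/
/-!
Writing `C = binomial(d, a)` and `b = d - a`, the difference of the two sides is `C (C - 1 - a b) / 2`.
Vandermonde's identity `binomial(a + b, a) = ∑ binomial(a, i) binomial(b, a - i)` already gives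
`C ≥ 1 + a b + 1` from the terms `i = a, a - 1, a - 2`, so neither factor vanishes.
-/

open Finset

theorem Nat.mul_add_two_le_add_choose {a b : ℕ} (ha : 2 ≤ a) (hb : 2 ≤ b) :
    a * b + 2 ≤ (a + b).choose a := by
  have hsub : {(a, 0), (a - 1, 1), (a - 2, 2)} ⊆ antidiagonal a := by
    simp only [insert_subset_iff, singleton_subset_iff, HasAntidiagonal.mem_antidiagonal]
    omega
  have hchoose_pred : a.choose (a - 1) = a := by
    rw [Nat.choose_symm (by omega : 1 ≤ a), Nat.choose_one_right]
  have hpos : 0 < a.choose (a - 2) * b.choose 2 :=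
    Nat.mul_pos (Nat.choose_pos (by omega)) (Nat.choose_pos hb)
  calc a * b + 2
      ≤ ∑ ij ∈ {(a, 0), (a - 1, 1), (a - 2, 2)}, a.choose ij.1 * b.choose ij.2 := by
        rw [sum_insert (by simp), sum_insert (by simp), sum_singleton]
        simp only [Nat.choose_self, Nat.choose_zero_right, Nat.choose_one_right, hchoose_pred]
        omega
    _ ≤ (a + b).choose a := by
        rw [Nat.add_choose_eq]
        exact sum_le_sum_of_subset hsub

theorem half_pred_mul_sub_two_sub_eq {K : Type*} [Field K] [NeZero (2 : K)] (C m : K) :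
    (C - 1) * (C - 2) / 2 - (1 + C * (m - 2) / 2) = C * (C - 1 - m) / 2 := by
  field_simp
  ring

/-- For integers `d`, `a` with `2 ≤ a ≤ d−2`, the arithmetic genus
`(C−1)(C−2)/2` of a plane curve of degree `C = binomial(d,a)` differs from
`1 + (1/2)·C·(a(d−a)−2)`. -/
theorem stmt_5 (d a : ℕ) (ha : 2 ≤ a) (had : a + 2 ≤ d) :
    ((Nat.choose d a : ℚ) - 1) * ((Nat.choose d a : ℚ) - 2) / 2
      ≠ 1 + (Nat.choose d a : ℚ) * ((a : ℚ) * ((d : ℚ) - (a : ℚ)) - 2) / 2 := by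
  obtain ⟨b, rfl⟩ : ∃ b, d = a + b := ⟨d - a, by omega⟩
  have hchoose : (a * b + 2 : ℚ) ≤ (a + b).choose a := by
    exact_mod_cast Nat.mul_add_two_le_add_choose ha (by omega)
  have hdiff : ((a + b : ℕ) : ℚ) - a = b := by push_cast; ring
  rw [hdiff, ← sub_ne_zero, half_pred_mul_sub_two_sub_eq]
  have hab : (0 : ℚ) ≤ a * b := by positivity
  exact (div_pos (mul_pos (by linarith) (by linarith)) two_pos).ne'
end

section
/- Let Π: H → ℙ^m be the finite flat morphism of degree binomial(d,a) from the relative Hilbert scheme H = Hilb^[a](A/ℙ^m) of a general projection p_z: A → ℙ^m of a smooth degree-d hypersurface A ⊂ ℙ^{m+1}. Let [ℓ] ∈ ℙ^m with ℓ ∩ A = h₁p₁+...+h_rp_r and [W] ∈ Π^{-1}([ℓ]) with W = k₁p₁+...+k_rp_r, 0 ≤ k_i ≤ h_i and Σk_i = a. Then the tangent space of the fiber Π^{-1}([ℓ]) at [W] has dimension Σ_{i=1}^r min(k_i, h_i − k_i). -/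
open Polynomial

set_option synthInstance.maxHeartbeats 1000000
set_option maxHeartbeats 1000000

noncomputable section

/-- The coordinate ring of the fiber `ℓ ∩ A = h₁p₁ + ⋯ + h_rp_r`, namely
`O_{ℓ∩A} = ∏ᵢ ℂ[t]/(t^{hᵢ})`. -/
abbrev FiberRing (r : ℕ) (h : Fin r → ℕ) : Type :=
  ∀ i : Fin r, Polynomial ℂ ⧸ (Ideal.span {(X : Polynomial ℂ) ^ (h i)})

/-- The ideal of the subscheme `W = k₁p₁ + ⋯ + k_rp_r` of `ℓ ∩ A`, generated by the
element whose `i`-th component is `t^{kᵢ}`. -/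
abbrev WIdeal (r : ℕ) (h k : Fin r → ℕ) : Ideal (FiberRing r h) :=
  Ideal.span
    {fun i => Ideal.Quotient.mk (Ideal.span {(X : Polynomial ℂ) ^ (h i)}) (X ^ (k i))}

/-!
`I_W` is the principal ideal of `O = ∏ᵢ ℂ[t]/(t^{hᵢ})` generated by `e = (t^{kᵢ})ᵢ`, whose
annihilator is generated by `f = (t^{hᵢ-kᵢ})ᵢ`. Evaluation at `e` therefore identifies
`Hom_O(I_W, O/I_W)` with the `f`-torsion of `O/(e)`. On the finite-dimensional space `O/(e)`,
multiplication by `f` has kernel and cokernel of the same dimension, and its cokernel is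
`O/(e, f)`. Componentwise `(tᵏ, t^{h-k}) = (t^{min(k, h-k)})` in `ℂ[t]/(tʰ)`, which gives the
sum of the minima.
-/

open Module

namespace Ideal

theorem pi_sup_pi {ι : Type*} {R : ι → Type*} [∀ i, Semiring (R i)] (I J : ∀ i, Ideal (R i)) :
    pi I ⊔ pi J = pi fun i => I i ⊔ J i := by
  refine le_antisymm (sup_le (fun r hr i => mem_sup_left (hr i))
    (fun r hr i => mem_sup_right (hr i))) fun r hr => ?_
  choose a ha b hb hab using fun i => Submodule.mem_sup.mp (hr i)
  exact Submodule.mem_sup.mpr ⟨a, ha, b, hb, funext hab⟩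

theorem span_singleton_pow_sup_span_singleton_pow {R : Type*} [CommSemiring R] (x : R)
    (a b : ℕ) : span {x ^ a} ⊔ span {x ^ b} = span {x ^ min a b} := by
  rcases le_total a b with hab | hba
  · rw [min_eq_left hab, sup_eq_left]
    exact span_singleton_le_span_singleton.mpr (pow_dvd_pow x hab)
  · rw [min_eq_right hba, sup_eq_right]
    exact span_singleton_le_span_singleton.mpr (pow_dvd_pow x hba)

theorem torsionOf_pi_self {ι : Type*} {R : ι → Type*} [∀ i, CommRing (R i)] (e : ∀ i, R i) :
    torsionOf (∀ i, R i) (∀ i, R i) e = pi fun i => torsionOf (R i) (R i) (e i) := by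
  ext c
  simp only [mem_torsionOf_iff, mem_pi, funext_iff]
  rfl

theorem torsionOf_quotient_span_pow {R : Type*} [CommRing R] [IsDomain R] {x : R} (hx : x ≠ 0)
    (n b : ℕ) :
    torsionOf (R ⧸ span {x ^ n}) (R ⧸ span {x ^ n}) (Quotient.mk _ (x ^ b)) =
      span {Quotient.mk _ (x ^ (n - b))} := by
  ext c
  obtain ⟨c, rfl⟩ := Quotient.mk_surjective c
  rw [mem_torsionOf_iff, smul_eq_mul, ← map_mul, Ideal.Quotient.eq_zero_iff_mem,
    mem_span_singleton, ← Set.image_singleton (f := Quotient.mk _), ← map_span,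
    mem_quotient_iff_mem
      (span_singleton_le_span_singleton.mpr (pow_dvd_pow x tsub_le_self)), mem_span_singleton]
  rcases le_total b n with hbn | hnb
  · rw [← Nat.sub_add_cancel hbn, pow_add, Nat.add_sub_cancel,
      mul_dvd_mul_iff_right (pow_ne_zero b hx)]
  · simpa [Nat.sub_eq_zero_of_le hnb] using dvd_mul_of_dvd_right (pow_dvd_pow x hnb) c

end Ideal

section

variable (K : Type*) [Field K]

section Algebra

variable {R : Type*} [CommRing R] [Algebra K R]

theorem finrank_linearMap_span_singleton_eq_finrank_torsionBy {M : Type*} [AddCommGroup M]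
    [Module R M] [Module K M] [IsScalarTower K R M] {e f : R}
    (he : Ideal.torsionOf R R e = Ideal.span {f}) :
    finrank K (Ideal.span {e} →ₗ[R] M) = finrank K (Submodule.torsionBy R M f) := by
  let e' : Ideal.span {e} := ⟨e, Ideal.mem_span_singleton_self e⟩
  let ev : (Ideal.span {e} →ₗ[R] M) →ₗ[K] M := (LinearMap.applyₗ e').restrictScalars K
  have hinj : Function.Injective ev := by
    intro φ ψ hφψ
    ext ⟨x, hx⟩
    obtain ⟨c, rfl⟩ := Ideal.mem_span_singleton'.mp hx
    change φ (c • e') = ψ (c • e')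
    rw [map_smul, map_smul]
    exact congrArg (c • ·) hφψ
  have hrange : LinearMap.range ev = (Submodule.torsionBy R M f).restrictScalars K := by
    ext m
    simp only [LinearMap.mem_range, Submodule.restrictScalars_mem, Submodule.mem_torsionBy_iff]
    constructor
    · rintro ⟨φ, rfl⟩
      have hfe : f • e' = 0 :=
        Subtype.ext ((Ideal.mem_torsionOf_iff _ _).mp (he ▸ Ideal.mem_span_singleton_self f))
      change f • φ e' = 0
      rw [← map_smul, hfe, map_zero]
    · intro hm
      have hle : Ideal.torsionOf R R e ≤ LinearMap.ker (LinearMap.toSpanSingleton R M m) := by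
        rwa [he, Ideal.span_le, Set.singleton_subset_iff]
      let toSpan := Ideal.quotTorsionOfEquivSpanSingleton R R e
      have hgen : toSpan.symm e' = Submodule.Quotient.mk 1 := by
        rw [LinearEquiv.symm_apply_eq, Ideal.quotTorsionOfEquivSpanSingleton_apply_mk, one_smul]
      refine ⟨(Submodule.liftQ _ _ hle).comp toSpan.symm.toLinearMap, ?_⟩
      change Submodule.liftQ _ _ hle (toSpan.symm e') = m
      rw [hgen, Submodule.liftQ_apply, LinearMap.toSpanSingleton_apply, one_smul]
  rw [(LinearEquiv.ofInjective ev hinj).finrank_eq, hrange]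
  rfl

theorem finrank_torsionBy_eq_finrank_quotient_span {S : Type*} [CommRing S] [Algebra R S]
    [Algebra K S] [IsScalarTower K R S] [Module.Finite K S] (f : R) :
    finrank K (Submodule.torsionBy R S f) = finrank K (S ⧸ Ideal.span {algebraMap R S f}) := by
  let μ : S →ₗ[K] S := (DistribSMul.toLinearMap R S f).restrictScalars K
  have hrange : LinearMap.range μ = (Ideal.span {algebraMap R S f}).restrictScalars K := by
    ext y
    simp [μ, Ideal.mem_span_singleton', Algebra.smul_def, mul_comm]
  have hker : finrank K (LinearMap.ker μ) = finrank K (Submodule.torsionBy R S f) := rfl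
  have hnullity := LinearMap.finrank_range_add_finrank_ker μ
  have hquot := Submodule.finrank_quotient_add_finrank
    ((Ideal.span {algebraMap R S f}).restrictScalars K)
  rw [(Submodule.Quotient.restrictScalarsEquiv K _).finrank_eq] at hquot
  rw [hrange] at hnullity
  omega

theorem finrank_torsionBy_quotient_eq_finrank_quotient_sup [Module.Finite K R] (I : Ideal R)
    (f : R) :
    finrank K (Submodule.torsionBy R (R ⧸ I) f) = finrank K (R ⧸ I ⊔ Ideal.span {f}) := by
  rw [finrank_torsionBy_eq_finrank_quotient_span,
    ← (DoubleQuot.quotQuotEquivQuotSupₐ K I (Ideal.span {f})).toLinearEquiv.finrank_eq,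
    Ideal.map_span, Set.image_singleton]
  rfl

end Algebra

theorem finrank_quotient_pi {ι : Type*} [Fintype ι] {R : ι → Type*} [∀ i, CommRing (R i)]
    [∀ i, Algebra K (R i)] [∀ i, Module.Finite K (R i)] (I : ∀ i, Ideal (R i)) :
    finrank K ((∀ i, R i) ⧸ Ideal.pi I) = ∑ i, finrank K (R i ⧸ I i) := by
  classical
  have hpi : (Ideal.pi I).restrictScalars K =
      Submodule.pi Set.univ fun i => (I i).restrictScalars K := by
    ext; simp [Ideal.mem_pi]
  rw [← (Submodule.Quotient.restrictScalarsEquiv K (Ideal.pi I)).finrank_eq, hpi,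
    (Submodule.quotientPi _).finrank_eq, finrank_pi_fintype]
  exact Finset.sum_congr rfl fun i _ =>
    (Submodule.Quotient.restrictScalarsEquiv K (I i)).finrank_eq

instance (n : ℕ) : Module.Finite K (K[X] ⧸ Ideal.span {(X : K[X]) ^ n}) :=
  (monic_X_pow n).finite_quotient

theorem finrank_quotient_span_X_pow_quotient_sup (n a b : ℕ) :
    finrank K ((K[X] ⧸ Ideal.span {(X : K[X]) ^ n}) ⧸
      (Ideal.span {Ideal.Quotient.mk (Ideal.span {(X : K[X]) ^ n}) (X ^ a)} ⊔
        Ideal.span {Ideal.Quotient.mk (Ideal.span {(X : K[X]) ^ n}) (X ^ b)})) =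
      min n (min a b) := by
  have hsup : Ideal.span {Ideal.Quotient.mk (Ideal.span {(X : K[X]) ^ n}) (X ^ a)} ⊔
      Ideal.span {Ideal.Quotient.mk (Ideal.span {(X : K[X]) ^ n}) (X ^ b)} =
      (Ideal.span {(X : K[X]) ^ min a b}).map (Ideal.Quotient.mkₐ K _) := by
    rw [map_pow, map_pow, Ideal.span_singleton_pow_sup_span_singleton_pow, Ideal.map_span,
      Set.image_singleton, map_pow, Ideal.Quotient.mkₐ_eq_mk]
  rw [hsup, (DoubleQuot.quotQuotEquivQuotSupₐ K _ _).toLinearEquiv.finrank_eq,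
    Ideal.span_singleton_pow_sup_span_singleton_pow, finrank_quotient_span_eq_natDegree,
    natDegree_X_pow]

end

theorem stmt_11_general (r : ℕ) (h k : Fin r → ℕ) :
    Module.finrank ℂ
        ((WIdeal r h k) →ₗ[FiberRing r h] (FiberRing r h ⧸ WIdeal r h k)) =
      ∑ i, min (k i) (h i - k i) := by
  let e : FiberRing r h := fun i => Ideal.Quotient.mk _ (X ^ k i)
  let f : FiberRing r h := fun i => Ideal.Quotient.mk _ (X ^ (h i - k i))
  have htorsion : Ideal.torsionOf _ _ e = Ideal.span {f} := by
    rw [Ideal.torsionOf_pi_self, ← Ideal.pi_span]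
    exact congrArg Ideal.pi (funext fun i => Ideal.torsionOf_quotient_span_pow X_ne_zero _ _)
  have hsup : Ideal.span {e} ⊔ Ideal.span {f} =
      Ideal.pi fun i => Ideal.span {e i} ⊔ Ideal.span {f i} := by
    rw [← Ideal.pi_span, ← Ideal.pi_span, Ideal.pi_sup_pi]
  rw [finrank_linearMap_span_singleton_eq_finrank_torsionBy ℂ htorsion,
    finrank_torsionBy_quotient_eq_finrank_quotient_sup, hsup, finrank_quotient_pi]
  refine Finset.sum_congr rfl fun i _ => ?_
  rw [finrank_quotient_span_X_pow_quotient_sup]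
  omega

/-- Tangent space to the fiber of `Π : Hilb^[a](A/ℙ^m) → ℙ^m` at `[W]`: if the fiber of
the projection is `ℓ ∩ A = h₁p₁ + ⋯ + h_rp_r` (with `∑ hᵢ = d`) and
`W = k₁p₁ + ⋯ + k_rp_r ⊆ ℓ ∩ A` has length `a = ∑ kᵢ`, then the tangent space of
`Π⁻¹([ℓ]) = Hilb^[a](ℓ ∩ A)` at `[W]`, namely `Hom_{O_{ℓ∩A}}(I_W, O_W)`, has
dimension `∑ᵢ min(kᵢ, hᵢ − kᵢ)`. -/
theorem stmt_11 (m d a r : ℕ) (h k : Fin r → ℕ)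
    (hh : ∀ i, 1 ≤ h i) (hk : ∀ i, k i ≤ h i)
    (hd : ∑ i, h i = d) (ha : ∑ i, k i = a) (ha1 : 1 ≤ a) (had : a ≤ d)
    (hm : 1 ≤ m) :
    Module.finrank ℂ
        ((WIdeal r h k) →ₗ[FiberRing r h] (FiberRing r h ⧸ WIdeal r h k)) =
      ∑ i, min (k i) (h i - k i) :=
  stmt_11_general r h k
end
end

section
/- With notation as above (Π: Hilb^[a](A/ℙ^m) → ℙ^m for the projection of a smooth hypersurface from a general point), Π is smooth at [W] if and only if W is a union of irreducible components of ℓ ∩ A, equivalently min(k_i, h_i − k_i) = 0 for all i, equivalently for each i either k_i = 0 or k_i = h_i. -/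
open Polynomial

set_option synthInstance.maxHeartbeats 1000000
set_option maxHeartbeats 1000000

noncomputable section

/-!
The tangent space of the fiber at `[W]` is `Hom(I, O/I)` with `I = (g)` principal. If `g` is
idempotent then `I = I²`, and any `φ : I → O/I` satisfies `φ(ab) = a φ(b) ∈ I·(O/I) = 0`.
Conversely, a homomorphism `(g) → O/(g)` sending `g ↦ x` exists as soon as `ann(g) x ⊆ (g)`.
In the factor `ℂ[t]/(t^h)` with `g = t^k`, `0 < k < h`, we have `ann(t^k) = (t^{h-k})`, so
`x = t^{k-1}` qualifies, and it is not in `(t^k)`; so the tangent space is nonzero.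
-/

section Tangent

variable {R : Type*} [CommRing R]

theorem subsingleton_linearMap_quotient_of_le_mul_self {I : Ideal R} (hI : I ≤ I * I) :
    Subsingleton (I →ₗ[R] R ⧸ I) := by
  suffices hzero : ∀ φ : I →ₗ[R] R ⧸ I, φ = 0 from
    ⟨fun φ ψ => (hzero φ).trans (hzero ψ).symm⟩
  intro φ
  ext ⟨y, hy⟩
  refine Submodule.mul_induction_on' (C := fun y hy => φ ⟨y, Ideal.mul_le_right hy⟩ = 0)
    (fun a ha b hb => ?_) (fun a ha' b hb' ha hb => ?_) (hI hy)
  · obtain ⟨z, hz⟩ := Submodule.Quotient.mk_surjective _ (φ ⟨b, hb⟩)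
    have hab : (⟨a * b, Ideal.mul_le_right (Ideal.mul_mem_mul ha hb)⟩ : I) = a • ⟨b, hb⟩ := rfl
    rw [hab, map_smul, ← hz, ← Submodule.Quotient.mk_smul, Submodule.Quotient.mk_eq_zero]
    exact Ideal.mul_mem_right z I ha
  · exact (map_add φ ⟨a, Ideal.mul_le_right ha'⟩ ⟨b, Ideal.mul_le_right hb'⟩).trans
      (by rw [ha, hb, add_zero])

theorem exists_linearMap_span_singleton_quotient {g x : R}
    (hann : ∀ c, c * g = 0 → g ∣ c * x) :
    ∃ φ : Ideal.span {g} →ₗ[R] R ⧸ Ideal.span {g},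
      φ ⟨g, Ideal.mem_span_singleton_self g⟩ = Submodule.Quotient.mk x := by
  set gI : Ideal.span {g} := ⟨g, Ideal.mem_span_singleton_self g⟩
  set π := LinearMap.toSpanSingleton R _ gI
  have hπ : Function.Surjective π := by
    rintro ⟨y, hy⟩
    obtain ⟨c, rfl⟩ := Ideal.mem_span_singleton'.mp hy
    exact ⟨c, rfl⟩
  set ψ := LinearMap.toSpanSingleton R (R ⧸ Ideal.span {g}) (Submodule.Quotient.mk x)
  have hker : LinearMap.ker π ≤ LinearMap.ker ψ := by
    intro c hc
    have hcg : c * g = 0 := congrArg Subtype.val (LinearMap.mem_ker.mp hc)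
    rw [LinearMap.mem_ker, LinearMap.toSpanSingleton_apply, ← Submodule.Quotient.mk_smul,
      Submodule.Quotient.mk_eq_zero]
    exact Ideal.mem_span_singleton.mpr (hann c hcg)
  refine ⟨(LinearMap.ker π).liftQ ψ hker ∘ₗ (π.quotKerEquivOfSurjective hπ).symm, ?_⟩
  have hg : gI = π.quotKerEquivOfSurjective hπ (Submodule.Quotient.mk 1) := by
    rw [LinearMap.quotKerEquivOfSurjective_apply_mk, LinearMap.toSpanSingleton_apply, one_smul]
  rw [LinearMap.comp_apply, hg, LinearEquiv.coe_coe, LinearEquiv.symm_apply_apply,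
    Submodule.liftQ_apply, LinearMap.toSpanSingleton_apply, one_smul]

theorem not_subsingleton_linearMap_span_singleton_quotient {g x : R}
    (hann : ∀ c, c * g = 0 → g ∣ c * x) (hx : ¬ g ∣ x) :
    ¬ Subsingleton (Ideal.span {g} →ₗ[R] R ⧸ Ideal.span {g}) := by
  intro hsub
  obtain ⟨φ, hφ⟩ := exists_linearMap_span_singleton_quotient hann
  rw [Subsingleton.elim φ 0, LinearMap.zero_apply, eq_comm,
    Submodule.Quotient.mk_eq_zero, Ideal.mem_span_singleton] at hφ
  exact hx hφ

end Tangent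

theorem Pi.dvd_single_iff {ι : Type*} [DecidableEq ι] {R : ι → Type*} [∀ i, CommRing (R i)]
    {g : ∀ i, R i} {i : ι} {y : R i} : g ∣ Pi.single i y ↔ g i ∣ y := by
  constructor
  · rintro ⟨c, hc⟩
    exact ⟨c i, by simpa using congrFun hc i⟩
  · rintro ⟨d, rfl⟩
    exact ⟨Pi.single i d, Pi.single_mul_right d⟩

theorem not_subsingleton_linearMap_span_singleton_quotient_pi {ι : Type*} [DecidableEq ι]
    {R : ι → Type*} [∀ i, CommRing (R i)] {g : ∀ i, R i} (i : ι) {x : R i}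
    (hann : ∀ c, c * g i = 0 → g i ∣ c * x) (hx : ¬ g i ∣ x) :
    ¬ Subsingleton (Ideal.span {g} →ₗ[∀ i, R i] (∀ i, R i) ⧸ Ideal.span {g}) := by
  refine not_subsingleton_linearMap_span_singleton_quotient (x := Pi.single i x)
    (fun c hc => ?_) (Pi.dvd_single_iff.not.mpr hx)
  rw [← Pi.single_mul_right, Pi.dvd_single_iff]
  exact hann (c i) (congrFun hc i)

section TruncatedPolynomial

variable {R : Type*} [CommRing R] {h k : ℕ}

theorem isIdempotentElem_mk_X_pow (hk : k = 0 ∨ k = h) :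
    IsIdempotentElem (Ideal.Quotient.mk (Ideal.span {(X : R[X]) ^ h}) (X ^ k)) := by
  rcases hk with rfl | rfl
  · simp [IsIdempotentElem]
  · rw [Ideal.Quotient.eq_zero_iff_mem.mpr (Ideal.mem_span_singleton_self _)]
    exact IsIdempotentElem.zero

theorem mk_X_pow_dvd_mk_iff (hk : k ≤ h) {p : R[X]} :
    Ideal.Quotient.mk (Ideal.span {X ^ h}) (X ^ k) ∣ Ideal.Quotient.mk _ p ↔ X ^ k ∣ p := by
  refine ⟨fun ⟨c, hc⟩ => ?_, map_dvd _⟩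
  obtain ⟨q, rfl⟩ := Ideal.Quotient.mk_surjective c
  rw [← map_mul, Ideal.Quotient.eq, Ideal.mem_span_singleton] at hc
  obtain ⟨s, hs⟩ := hc
  rw [show p = X ^ k * q + X ^ h * s by rw [← hs]; ring]
  exact dvd_add (dvd_mul_right _ _) ((pow_dvd_pow X hk).mul_right s)

theorem mk_mul_mk_X_pow_eq_zero_iff [IsDomain R] (hk : k ≤ h) {p : R[X]} :
    Ideal.Quotient.mk (Ideal.span {X ^ h}) p * Ideal.Quotient.mk _ (X ^ k) = 0 ↔
      X ^ (h - k) ∣ p := by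
  have hsplit : (X : R[X]) ^ h = X ^ (h - k) * X ^ k := by
    rw [← pow_add, Nat.sub_add_cancel hk]
  rw [← map_mul, Ideal.Quotient.eq_zero_iff_mem, Ideal.mem_span_singleton, hsplit,
    mul_dvd_mul_iff_right (pow_ne_zero _ X_ne_zero)]

theorem not_mk_X_pow_dvd_mk_X_pow_pred [IsDomain R] (hk0 : k ≠ 0) (hk : k ≤ h) :
    ¬ Ideal.Quotient.mk (Ideal.span {(X : R[X]) ^ h}) (X ^ k) ∣
      Ideal.Quotient.mk _ (X ^ (k - 1)) := by
  rw [mk_X_pow_dvd_mk_iff hk, pow_dvd_pow_iff X_ne_zero not_isUnit_X]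
  omega

theorem mk_X_pow_dvd_mul_mk_X_pow_pred [IsDomain R] (hk : k < h)
    (c : R[X] ⧸ Ideal.span {(X : R[X]) ^ h}) (hc : c * Ideal.Quotient.mk _ (X ^ k) = 0) :
    Ideal.Quotient.mk _ (X ^ k) ∣ c * Ideal.Quotient.mk _ (X ^ (k - 1)) := by
  obtain ⟨p, rfl⟩ := Ideal.Quotient.mk_surjective c
  obtain ⟨q, rfl⟩ := (mk_mul_mk_X_pow_eq_zero_iff hk.le).mp hc
  rw [← map_mul, mk_X_pow_dvd_mk_iff hk.le]
  exact (pow_dvd_pow X (by omega : k ≤ (h - k) + (k - 1))).trans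
    (Dvd.intro q (by rw [pow_add]; ring))

end TruncatedPolynomial

theorem subsingleton_linearMap_wideal_quotient_iff {r : ℕ} {h k : Fin r → ℕ}
    (hk : ∀ i, k i ≤ h i) :
    Subsingleton ((WIdeal r h k) →ₗ[FiberRing r h] (FiberRing r h ⧸ WIdeal r h k)) ↔
      ∀ i, k i = 0 ∨ k i = h i := by
  refine ⟨fun hsub => ?_, fun hkh => ?_⟩
  · by_contra! ⟨i, hk0, hkh⟩
    exact not_subsingleton_linearMap_span_singleton_quotient_pi i
      (mk_X_pow_dvd_mul_mk_X_pow_pred (lt_of_le_of_ne (hk i) hkh))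
      (not_mk_X_pow_dvd_mk_X_pow_pred hk0 (hk i)) hsub
  · have hidem : IsIdempotentElem
        (fun i => Ideal.Quotient.mk (Ideal.span {(X : ℂ[X]) ^ h i}) (X ^ k i)) :=
      funext fun i => isIdempotentElem_mk_X_pow (hkh i)
    apply subsingleton_linearMap_quotient_of_le_mul_self
    rw [Ideal.span_singleton_mul_span_singleton, hidem.eq]

theorem stmt_12_general (r : ℕ) (h k : Fin r → ℕ)
    (hk : ∀ i, k i ≤ h i) :
    (Subsingleton ((WIdeal r h k) →ₗ[FiberRing r h] (FiberRing r h ⧸ WIdeal r h k)) ↔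
        ∀ i, min (k i) (h i - k i) = 0) ∧
      (Subsingleton ((WIdeal r h k) →ₗ[FiberRing r h] (FiberRing r h ⧸ WIdeal r h k)) ↔
        ∀ i, k i = 0 ∨ k i = h i) := by
  have key := subsingleton_linearMap_wideal_quotient_iff hk
  refine ⟨key.trans (forall_congr' fun i => ?_), key⟩
  have := hk i
  omega

/-- Smoothness criterion for `Π : Hilb^[a](A/ℙ^m) → ℙ^m` at `[W]`: with
`ℓ ∩ A = h₁p₁ + ⋯ + h_rp_r` and `W = k₁p₁ + ⋯ + k_rp_r` (`0 ≤ kᵢ ≤ hᵢ`), since `Π` is a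
finite flat morphism between `m`-dimensional schemes, `Π` is smooth at `[W]` if and only
if the tangent space `Hom(I_W, O_W)` of the fiber at `[W]` vanishes; and this holds if
and only if `min(kᵢ, hᵢ − kᵢ) = 0` for all `i`, if and only if for each `i` either
`kᵢ = 0` or `kᵢ = hᵢ`, i.e. `W` is a union of irreducible components of `ℓ ∩ A`. -/
theorem stmt_12 (r : ℕ) (h k : Fin r → ℕ)
    (hh : ∀ i, 1 ≤ h i) (hk : ∀ i, k i ≤ h i) :
    (Subsingleton ((WIdeal r h k) →ₗ[FiberRing r h] (FiberRing r h ⧸ WIdeal r h k)) ↔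
        ∀ i, min (k i) (h i - k i) = 0) ∧
      (Subsingleton ((WIdeal r h k) →ₗ[FiberRing r h] (FiberRing r h ⧸ WIdeal r h k)) ↔
        ∀ i, k i = 0 ∨ k i = h i) :=
  stmt_12_general r h k hk

end
end

section
/- Let Y = ℙ_{ℙ¹}(O ⊕ O(a)) with a ≥ 1, with minimal section C₀ and fiber f. Let W ⊂ Y be a length-a zero-dimensional subscheme supported on a section G̃ disjoint from C₀ (numerically G̃ ≡ C₀ + af), and let y ∈ Y \ (C₀ ∪ G̃) not lying on any fiber through a point of W. Then h⁰(Y, O_Y(C₀ + af) ⊗ I_W ⊗ I_y) = 1, i.e. there is a unique curve in |C₀ + af| containing W and y, and this curve is irreducible (a section of the ruling). -/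
/-!
Since `φ` and `c₀ g - c g₀` are forms of the same degree, divisibility forces
`c₀ g - c g₀ = l φ` for a scalar `l`, so the curves through `W` are parametrised by
`(c, l) ∈ ℂ²` via `g = c₀⁻¹ (c g₀ + l φ)`. Evaluated at `y`, passing through `y` becomes the
single linear equation `c (c₀ v₀ + g₀(y)) + l φ(y) = 0`; as `φ(y) ≠ 0` its solutions form a
line on which `c = 0` forces `l = 0`.
-/

open MvPolynomial

namespace MvPolynomial

variable {σ R K : Type*}

theorem homogeneousComponent_add_mul_of_isHomogeneous [CommSemiring R] {m : ℕ}
    {φ : MvPolynomial σ R} (hφ : φ.IsHomogeneous m) (k : ℕ) (q : MvPolynomial σ R) :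
    homogeneousComponent (m + k) (φ * q) = φ * homogeneousComponent k q := by
  conv_lhs => rw [← sum_homogeneousComponent q, Finset.mul_sum, map_sum]
  have hcomp (i : ℕ) : homogeneousComponent (m + k) (φ * homogeneousComponent i q) =
      if k = i then φ * homogeneousComponent i q else 0 := by
    rw [homogeneousComponent_of_mem (hφ.mul (homogeneousComponent_isHomogeneous i q))]
    simp only [Nat.add_left_cancel_iff]
  simp only [hcomp, Finset.sum_ite_eq, Finset.mem_range]
  split_ifs with hk
  · rfl
  · rw [homogeneousComponent_eq_zero _ _ (by omega), mul_zero]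

theorem IsHomogeneous.exists_eq_C_mul_of_dvd [CommSemiring R] {n : ℕ}
    {φ P : MvPolynomial σ R} (hφ : φ.IsHomogeneous n) (hP : P.IsHomogeneous n)
    (h : φ ∣ P) : ∃ l : R, P = C l * φ := by
  obtain ⟨q, rfl⟩ := h
  refine ⟨coeff 0 q, ?_⟩
  have := homogeneousComponent_add_mul_of_isHomogeneous hφ 0 q
  rwa [add_zero, homogeneousComponent_eq_self hP, homogeneousComponent_zero,
    mul_comm φ (C _)] at this

theorem C_mul_sub_C_mul_eq_iff [Field K] {c₀ c l : K} {g g₀ φ : MvPolynomial σ K}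
    (hc₀ : c₀ ≠ 0) :
    C c₀ * g - C c * g₀ = C l * φ ↔ g = C c₀⁻¹ * (C c * g₀ + C l * φ) := by
  have hC : C c₀ * C c₀⁻¹ = (1 : MvPolynomial σ K) := by rw [← C_mul, mul_inv_cancel₀ hc₀, C_1]
  constructor
  · intro h
    linear_combination C c₀⁻¹ * h - g * hC
  · rintro rfl
    linear_combination (C c * g₀ + C l * φ) * hC

theorem mul_add_eval_eq_of_C_mul_sub_C_mul_eq [CommRing R] {c₀ c l v₀ : R}
    {g g₀ φ : MvPolynomial σ R}
    (h : C c₀ * g - C c * g₀ = C l * φ) (x : σ → R) :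
    c₀ * (c * v₀ + eval x g) = c * (c₀ * v₀ + eval x g₀) + l * eval x φ := by
  have := congrArg (eval x) h
  simp only [map_sub, map_mul, eval_C] at this
  linear_combination this

end MvPolynomial

/-- Coordinates: a section of `O_Y(C₀ + af)` is a pair `(c, g)`, `c ∈ ℂ`, `g` a binary form of
degree `a`, whose curve is a section of the ruling iff `c ≠ 0`. `G̃` is the section `(c₀, g₀)`,
`W ⊂ G̃ ≅ ℙ¹` is the divisor of `φ`, so `(c, g)` contains `W` iff `φ ∣ c₀ g - c g₀`, and
`y = ([s₀ : t₀], v₀)` in the chart complementary to `C₀`, so `(c, g)` passes through `y` iff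
`c v₀ + g(s₀, t₀) = 0`. -/
theorem stmt_15_general (a : ℕ)
    (c₀ : ℂ) (hc₀ : c₀ ≠ 0)
    (g₀ : MvPolynomial (Fin 2) ℂ) (hg₀ : g₀.IsHomogeneous a)
    (φ : MvPolynomial (Fin 2) ℂ) (hφ : φ.IsHomogeneous a)
    (s₀ t₀ : ℂ) (v₀ : ℂ)
    (hyW : eval ![s₀, t₀] φ ≠ 0) :
    ∃ (c : ℂ) (g : MvPolynomial (Fin 2) ℂ),
      g.IsHomogeneous a ∧ c ≠ 0 ∧
      φ ∣ (C c₀ * g - C c * g₀) ∧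
      c * v₀ + eval ![s₀, t₀] g = 0 ∧
      ∀ (c' : ℂ) (g' : MvPolynomial (Fin 2) ℂ),
        g'.IsHomogeneous a →
        φ ∣ (C c₀ * g' - C c' * g₀) →
        c' * v₀ + eval ![s₀, t₀] g' = 0 →
        ∃ lam : ℂ, c' = lam * c ∧ g' = C lam * g := by
  set y : Fin 2 → ℂ := ![s₀, t₀]
  set d := c₀ * v₀ + eval y g₀
  set c := eval y φ
  set g := C c₀⁻¹ * (C c * g₀ + C (-d) * φ)
  have hW : C c₀ * g - C c * g₀ = C (-d) * φ := (C_mul_sub_C_mul_eq_iff hc₀).2 rfl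
  refine ⟨c, g, (hg₀.C_mul _ |>.add (hφ.C_mul _)).C_mul _, hyW, Dvd.intro_left _ hW.symm, ?_, ?_⟩
  · refine (mul_eq_zero.1 ?_).resolve_left hc₀
    rw [mul_add_eval_eq_of_C_mul_sub_C_mul_eq hW]
    ring
  · intro c' g' hg' hdvd hy
    obtain ⟨l', hW'⟩ := hφ.exists_eq_C_mul_of_dvd (hg'.C_mul c₀ |>.sub (hg₀.C_mul c')) hdvd
    have hrel : c' * d + l' * c = 0 := by
      rw [← mul_add_eval_eq_of_C_mul_sub_C_mul_eq hW', hy, mul_zero]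
    refine ⟨c' / c, by field_simp, ?_⟩
    have hl' : l' = c' / c * -d := by field_simp; linear_combination hrel
    rw [(C_mul_sub_C_mul_eq_iff hc₀).1 hW', hl']
    nth_rewrite 1 [show c' = c' / c * c by field_simp]
    simp only [g, C_mul]
    ring

/-- Uniqueness of the member of `|C₀ + af|` through `W` and `y` on the Hirzebruch
surface `Y = ℙ_{ℙ¹}(O ⊕ O(a))`, `a ≥ 1`, in coordinates.  Global sections of
`O_Y(C₀ + af) = O_Y(1)` are pairs `(c, g)` with `c ∈ ℂ` and `g` a binary form of degree
`a` (so `h⁰ = a + 2`); the curve of `(c, g)` is a section of the ruling iff `c ≠ 0`.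
The section `G̃` disjoint from `C₀` corresponds to `(c₀, g₀)` with `c₀ ≠ 0`; the
length-`a` subscheme `W ⊂ G̃` corresponds (via `G̃ ≅ ℙ¹`) to the divisor of a nonzero
binary form `φ` of degree `a`, and the curve of `(c, g)` contains `W` iff
`φ ∣ c₀·g − c·g₀` (the restriction of `(c,g)` to `G̃`).  The point
`y ∈ Y ∖ (C₀ ∪ G̃)`, not on any fiber through a point of `W`, has base point
`[s₀ : t₀] ∈ ℙ¹` with `φ(s₀,t₀) ≠ 0` and fiber coordinate `v₀` (in the chart
complementing `C₀`), with `y ∉ G̃` reading `c₀v₀ + g₀(s₀,t₀) ≠ 0`; the curve of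
`(c, g)` passes through `y` iff `c·v₀ + g(s₀,t₀) = 0`.  Conclusion: there is a
solution `(c, g)`, unique up to scalar (i.e. `h⁰(O_Y(C₀+af) ⊗ I_W ⊗ I_y) = 1`), and
it has `c ≠ 0`, i.e. the unique curve through `W` and `y` is irreducible, a section
of the ruling. -/
theorem stmt_15 (a : ℕ) (ha : 1 ≤ a)
    (c₀ : ℂ) (hc₀ : c₀ ≠ 0)
    (g₀ : MvPolynomial (Fin 2) ℂ) (hg₀ : g₀.IsHomogeneous a)
    (φ : MvPolynomial (Fin 2) ℂ) (hφ : φ.IsHomogeneous a) (hφ0 : φ ≠ 0)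
    (s₀ t₀ : ℂ) (hst : ¬(s₀ = 0 ∧ t₀ = 0)) (v₀ : ℂ)
    (hyW : eval ![s₀, t₀] φ ≠ 0)
    (hyG : c₀ * v₀ + eval ![s₀, t₀] g₀ ≠ 0) :
    ∃ (c : ℂ) (g : MvPolynomial (Fin 2) ℂ),
      g.IsHomogeneous a ∧ c ≠ 0 ∧
      φ ∣ (C c₀ * g - C c * g₀) ∧
      c * v₀ + eval ![s₀, t₀] g = 0 ∧
      ∀ (c' : ℂ) (g' : MvPolynomial (Fin 2) ℂ),
        g'.IsHomogeneous a →
        φ ∣ (C c₀ * g' - C c' * g₀) →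
        c' * v₀ + eval ![s₀, t₀] g' = 0 →
        ∃ lam : ℂ, c' = lam * c ∧ g' = C lam * g :=
  stmt_15_general a c₀ hc₀ g₀ hg₀ φ hφ s₀ t₀ v₀ hyW
end
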